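/- Let b be a real number with 0 < b < 1/sqrt(2). Define F(alpha, m) := the integral from 0 to alpha of (1 - m*sin^2(theta))^(-1/2) d theta, and for t >= 0 near 0 set m(t) := 4*sin(t)/(1 + sin(t))^2, delta(t) := arcsin( sqrt(1 - b^2)*(1 - sin^2(t)) / (1 - (1 - b^2)*sin^2(t)) ), and rho(t) := (F(pi/2 - delta(t)/2, m(t)) - F(delta(t)/2, m(t))) / F(pi/2, m(t)). Then the first one-sided derivative of rho at t = 0 (the derivative of rho restricted to [0, epsilon)) equals 0, and the second one-sided derivative of rho at t = 0 equals b*sqrt(1 - b^2)/pi. -/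

import Mathlib

/-!
Substituting `θ = (π/2 - δ) u + δ/2` turns `F(π/2 - δ/2, m) - F(δ/2, m)` into
`N(t) = (π/2 - δ(t)) ∫₀¹ (1 - m(t) sin² θ)^(-1/2) du`, and `F(π/2, m)` is the case `δ ≡ 0` of
the same expression, so `ρ = N / D` with `t` entering only through integrands on a fixed
interval. These can be differentiated twice under the integral sign, the `t`-derivatives of the
integrands being continuous, hence bounded, on a compact neighbourhood. At `t = 0` we have
`m = 0` and `δ' = 0`, so the differentiated integrands reduce to `m' sin² θ / 2` and
`m'' sin² θ / 2 + 3 m'² sin⁴ θ / 4`, whose integrals over `[δ/2, π/2 - δ/2]` are elementary.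
Everything proportional to the length of that interval cancels in the quotient, leaving
`ρ'(0) = 0` and `ρ''(0) = -(2/π) (δ''(0) + 3 m'(0)² sin δ(0) cos δ(0) / 32)`; with `m'(0) = 4`,
`δ''(0) = -2b√(1 - b²)`, `sin δ(0) = √(1 - b²)` and `cos δ(0) = b` this is `b√(1 - b²)/π`.
-/

open Real Set Filter Topology MeasureTheory

namespace KolodziejRotation

theorem hasDerivAt_intervalIntegral_of_continuousOn {U : Set ℝ} (hU : IsOpen U)
    {G G' : ℝ → ℝ → ℝ} {a b t₀ : ℝ} (ht₀ : t₀ ∈ U)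
    (hG : ∀ t ∈ U, ContinuousOn (G t) (uIcc a b))
    (hG' : ContinuousOn (Function.uncurry G') (U ×ˢ uIcc a b))
    (hderiv : ∀ t ∈ U, ∀ u ∈ uIcc a b, HasDerivAt (G · u) (G' t u) t) :
    HasDerivAt (fun t => ∫ u in a..b, G t u) (∫ u in a..b, G' t₀ u) t₀ := by
  obtain ⟨ε, hε, hball⟩ := Metric.nhds_basis_closedBall.mem_iff.1 (hU.mem_nhds ht₀)
  obtain ⟨C, hC⟩ := (isCompact_closedBall t₀ ε).prod isCompact_uIcc
    |>.exists_bound_of_continuousOn (hG'.mono (prod_mono hball subset_rfl))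
  have hΙ : uIoc a b ⊆ uIcc a b := uIoc_subset_uIcc
  have hG'₀ : ContinuousOn (G' t₀) (uIcc a b) :=
    hG'.comp (continuousOn_const.prodMk continuousOn_id) fun u hu => ⟨ht₀, hu⟩
  refine (intervalIntegral.hasDerivAt_integral_of_dominated_loc_of_deriv_le (bound := fun _ => C)
    (Metric.ball_mem_nhds t₀ hε) ?_ ((hG t₀ ht₀).intervalIntegrable)
    ((hG'₀.mono hΙ).aestronglyMeasurable measurableSet_uIoc) ?_ intervalIntegrable_const ?_).2
  · filter_upwards [hU.mem_nhds ht₀] with t ht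
    exact ((hG t ht).mono hΙ).aestronglyMeasurable measurableSet_uIoc
  · exact ae_of_all _ fun u hu t ht =>
      hC (t, u) ⟨Metric.ball_subset_closedBall ht, hΙ hu⟩
  · exact ae_of_all _ fun u hu t ht =>
      hderiv t (hball (Metric.ball_subset_closedBall ht)) u (hΙ hu)

theorem iteratedDerivWithin_one_two_eq_of_hasDerivAt {f f' : ℝ → ℝ} {s : Set ℝ} {a f'' : ℝ}
    (hs : UniqueDiffOn ℝ s) (ha : a ∈ s) (hf : ∀ᶠ t in 𝓝 a, HasDerivAt f (f' t) t)
    (hf' : HasDerivAt f' f'' a) :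
    iteratedDerivWithin 1 f s a = f' a ∧ iteratedDerivWithin 2 f s a = f'' := by
  have h₁ : iteratedDerivWithin 1 f s =ᶠ[𝓝[s] a] f' := by
    filter_upwards [nhdsWithin_le_nhds hf, self_mem_nhdsWithin] with t ht hts
    rw [iteratedDerivWithin_one]
    exact ht.hasDerivWithinAt.derivWithin (hs t hts)
  refine ⟨h₁.eq_of_nhdsWithin ha, ?_⟩
  rw [iteratedDerivWithin_succ, h₁.derivWithin_eq (h₁.eq_of_nhdsWithin ha)]
  exact hf'.hasDerivWithinAt.derivWithin (hs a ha)

theorem hasDerivAt_one_sub_rpow_neg_half {s : ℝ → ℝ} {s₁ t : ℝ} (hs : HasDerivAt s s₁ t)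
    (h : s t < 1) :
    HasDerivAt (fun t => (1 - s t) ^ (-(1 : ℝ) / 2)) (s₁ / 2 * (1 - s t) ^ (-(3 : ℝ) / 2)) t := by
  convert (hs.const_sub 1).rpow_const (p := -(1 : ℝ) / 2) (Or.inl (by linarith)) using 1
  rw [show -(1 : ℝ) / 2 - 1 = -3 / 2 by norm_num]
  ring

theorem hasDerivAt_deriv_one_sub_rpow_neg_half {s s₁ : ℝ → ℝ} {s₂ t : ℝ}
    (hs : HasDerivAt s (s₁ t) t) (hs₁ : HasDerivAt s₁ s₂ t) (h : s t < 1) :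
    HasDerivAt (fun t => s₁ t / 2 * (1 - s t) ^ (-(3 : ℝ) / 2))
      (s₂ / 2 * (1 - s t) ^ (-(3 : ℝ) / 2) + 3 / 4 * s₁ t ^ 2 * (1 - s t) ^ (-(5 : ℝ) / 2)) t := by
  refine ((hs₁.div_const 2).mul
    ((hs.const_sub 1).rpow_const (p := -(3 : ℝ) / 2) (Or.inl (by linarith)))).congr_deriv ?_
  rw [show -(3 : ℝ) / 2 - 1 = -5 / 2 by norm_num]
  ring

theorem hasDerivAt_mul_sin_sq {m θ : ℝ → ℝ} {m₁ θ₁ t : ℝ} (hm : HasDerivAt m m₁ t)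
    (hθ : HasDerivAt θ θ₁ t) :
    HasDerivAt (fun t => m t * sin (θ t) ^ 2)
      (m₁ * sin (θ t) ^ 2 + m t * sin (2 * θ t) * θ₁) t := by
  refine (hm.mul (hθ.sin.pow 2)).congr_deriv ?_
  simp only [Pi.pow_apply, sin_two_mul]
  ring

theorem hasDerivAt_deriv_mul_sin_sq {m m₁ θ θ₁ : ℝ → ℝ} {m₂ θ₂ t : ℝ}
    (hm : HasDerivAt m (m₁ t) t) (hm₁ : HasDerivAt m₁ m₂ t)
    (hθ : HasDerivAt θ (θ₁ t) t) (hθ₁ : HasDerivAt θ₁ θ₂ t) :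
    HasDerivAt (fun t => m₁ t * sin (θ t) ^ 2 + m t * sin (2 * θ t) * θ₁ t)
      (m₂ * sin (θ t) ^ 2 + 2 * m₁ t * sin (2 * θ t) * θ₁ t +
        m t * (2 * cos (2 * θ t) * θ₁ t ^ 2 + sin (2 * θ t) * θ₂)) t := by
  refine ((hasDerivAt_mul_sin_sq hm₁ hθ).add
    ((hm.mul ((hθ.const_mul 2).sin)).mul hθ₁)).congr_deriv ?_
  simp only [Pi.mul_apply]
  ring

theorem hasDerivAt_deriv_div {N N₁ D D₁ : ℝ → ℝ} {N₂ D₂ t : ℝ}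
    (hN : HasDerivAt N (N₁ t) t) (hD : HasDerivAt D (D₁ t) t)
    (hN₁ : HasDerivAt N₁ N₂ t) (hD₁ : HasDerivAt D₁ D₂ t) (hD₀ : D t ≠ 0) :
    HasDerivAt (fun s => (N₁ s * D s - N s * D₁ s) / D s ^ 2)
      ((N₂ * D t - N t * D₂) / D t ^ 2 - 2 * D₁ t * (N₁ t * D t - N t * D₁ t) / D t ^ 3) t := by
  refine (((hN₁.mul hD).sub (hN.mul hD₁)).div (hD.pow 2) (pow_ne_zero 2 hD₀)).congr_deriv ?_
  simp only [Pi.mul_apply, Pi.sub_apply, Pi.pow_apply]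
  field_simp
  ring

theorem mul_sin_sq_lt_one {μ : ℝ} (hμ : |μ| < 1) (θ : ℝ) : μ * sin θ ^ 2 < 1 := by
  have := abs_lt.1 hμ
  nlinarith [sq_nonneg (sin θ), sin_sq_le_one θ]

theorem integral_sin_sq_symm (d : ℝ) :
    ∫ θ in d / 2..π / 2 - d / 2, sin θ ^ 2 = (π / 2 - d) / 2 := by
  rw [integral_sin_sq, sin_pi_div_two_sub, cos_pi_div_two_sub]
  ring

theorem integral_sin_pow_four_symm (d : ℝ) :
    ∫ θ in d / 2..π / 2 - d / 2, sin θ ^ 4 = 3 * (π / 2 - d) / 8 - sin d * cos d / 8 := by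
  have h := integral_sin_pow (a := d / 2) (b := π / 2 - d / 2) 2
  norm_num only at h
  have hd : d = 2 * (d / 2) := by ring
  rw [h, integral_sin_sq_symm, sin_pi_div_two_sub, cos_pi_div_two_sub, hd, sin_two_mul,
    cos_two_mul, ← hd]
  linear_combination (sin (d / 2) * cos (d / 2) / 4) * sin_sq_add_cos_sq (d / 2)

structure HasTwoDerivsOn (f f₁ f₂ : ℝ → ℝ) (U : Set ℝ) : Prop where
  hasDerivAt : ∀ t ∈ U, HasDerivAt f (f₁ t) t
  hasDerivAt_deriv : ∀ t ∈ U, HasDerivAt f₁ (f₂ t) t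
  continuousOn_deriv2 : ContinuousOn f₂ U

theorem HasTwoDerivsOn.mono {f f₁ f₂ : ℝ → ℝ} {U V : Set ℝ} (h : HasTwoDerivsOn f f₁ f₂ U)
    (hVU : V ⊆ U) :
    HasTwoDerivsOn f f₁ f₂ V :=
  ⟨fun t ht => h.hasDerivAt t (hVU ht), fun t ht => h.hasDerivAt_deriv t (hVU ht),
    h.continuousOn_deriv2.mono hVU⟩

theorem HasTwoDerivsOn.arcsin {w w₁ w₂ : ℝ → ℝ} {U : Set ℝ} (hw : HasTwoDerivsOn w w₁ w₂ U)
    (hw_lt : ∀ t ∈ U, |w t| < 1) :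
    HasTwoDerivsOn (fun t => arcsin (w t)) (fun t => w₁ t / √(1 - w t ^ 2))
      (fun t => w₂ t / √(1 - w t ^ 2) + w t * w₁ t ^ 2 / √(1 - w t ^ 2) ^ 3) U := by
  have hpos : ∀ t ∈ U, 0 < 1 - w t ^ 2 := fun t ht => by
    have := abs_lt.1 (hw_lt t ht); nlinarith
  have hsqrt : ∀ t ∈ U, √(1 - w t ^ 2) ≠ 0 := fun t ht => (sqrt_pos.2 (hpos t ht)).ne'
  refine ⟨fun t ht => ?_, fun t ht => ?_, ?_⟩
  · have := abs_lt.1 (hw_lt t ht)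
    refine ((hasDerivAt_arcsin (by linarith) (by linarith)).comp t
      (hw.hasDerivAt t ht)).congr_deriv ?_
    ring
  · have hroot := (((hw.hasDerivAt t ht).pow 2).const_sub 1).sqrt (hpos t ht).ne'
    simp only [Pi.pow_apply] at hroot
    refine ((hw.hasDerivAt_deriv t ht).div hroot (hsqrt t ht)).congr_deriv ?_
    have h2 : √(1 - w t ^ 2) ^ 2 = 1 - w t ^ 2 := sq_sqrt (hpos t ht).le
    field_simp
    rw [h2]
    ring
  · have hw₀ : ContinuousOn w U := fun t ht => (hw.hasDerivAt t ht).continuousAt.continuousWithinAt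
    have hw₁ : ContinuousOn w₁ U :=
      fun t ht => (hw.hasDerivAt_deriv t ht).continuousAt.continuousWithinAt
    have hw₂ := hw.continuousOn_deriv2
    have hroot : ContinuousOn (fun t => √(1 - w t ^ 2)) U := by fun_prop
    exact (hw₂.div hroot hsqrt).add ((hw₀.mul (hw₁.pow 2)).div (hroot.pow 3)
      fun t ht => pow_ne_zero 3 (hsqrt t ht))

noncomputable section
variable (m m₁ m₂ δ δ₁ δ₂ : ℝ → ℝ)

def arcAngle (t u : ℝ) : ℝ := (π / 2 - δ t) * u + δ t / 2

def weight (t u : ℝ) : ℝ := m t * sin (arcAngle δ t u) ^ 2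

def weightDeriv (t u : ℝ) : ℝ :=
  m₁ t * sin (arcAngle δ t u) ^ 2 + m t * sin (2 * arcAngle δ t u) * ((1 / 2 - u) * δ₁ t)

def weightDeriv2 (t u : ℝ) : ℝ :=
  m₂ t * sin (arcAngle δ t u) ^ 2 + 2 * m₁ t * sin (2 * arcAngle δ t u) * ((1 / 2 - u) * δ₁ t) +
    m t * (2 * cos (2 * arcAngle δ t u) * ((1 / 2 - u) * δ₁ t) ^ 2 +
      sin (2 * arcAngle δ t u) * ((1 / 2 - u) * δ₂ t))

def kernel (t u : ℝ) : ℝ := (1 - weight m δ t u) ^ (-(1 : ℝ) / 2)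

def kernelDeriv (t u : ℝ) : ℝ :=
  weightDeriv m m₁ δ δ₁ t u / 2 * (1 - weight m δ t u) ^ (-(3 : ℝ) / 2)

def kernelDeriv2 (t u : ℝ) : ℝ :=
  weightDeriv2 m m₁ m₂ δ δ₁ δ₂ t u / 2 * (1 - weight m δ t u) ^ (-(3 : ℝ) / 2) +
    3 / 4 * weightDeriv m m₁ δ δ₁ t u ^ 2 * (1 - weight m δ t u) ^ (-(5 : ℝ) / 2)

-- `F(π/2 - δ/2, m) - F(δ/2, m)` of the statement, after the substitution `θ = arcAngle δ t u`.
def arcIntegral (t : ℝ) : ℝ := (π / 2 - δ t) * ∫ u in (0 : ℝ)..1, kernel m δ t u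

def arcIntegralDeriv (t : ℝ) : ℝ :=
  -δ₁ t * (∫ u in (0 : ℝ)..1, kernel m δ t u) +
    (π / 2 - δ t) * ∫ u in (0 : ℝ)..1, kernelDeriv m m₁ δ δ₁ t u

end

variable {m m₁ m₂ δ δ₁ δ₂ : ℝ → ℝ} {U : Set ℝ}

theorem weight_lt_one {t : ℝ} (hm : |m t| < 1) (u : ℝ) : weight m δ t u < 1 :=
  mul_sin_sq_lt_one hm _

theorem continuous_kernel {t : ℝ} (hm : |m t| < 1) : Continuous (kernel m δ t) := by
  have hw : ∀ u, 1 - weight m δ t u ≠ 0 := fun u => (sub_pos.2 (weight_lt_one hm u)).ne'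
  exact Continuous.rpow_const (by unfold weight arcAngle; fun_prop) fun u => Or.inl (hw u)

theorem continuousOn_kernelDeriv (hm : HasTwoDerivsOn m m₁ m₂ U)
    (hδ : HasTwoDerivsOn δ δ₁ δ₂ U) (hm_lt : ∀ t ∈ U, |m t| < 1) :
    ContinuousOn (Function.uncurry (kernelDeriv m m₁ δ δ₁)) (U ×ˢ univ) := by
  rintro ⟨t, u⟩ ⟨ht, -⟩
  apply ContinuousAt.continuousWithinAt
  have hm0 : ContinuousAt m t := (hm.hasDerivAt t ht).continuousAt
  have hm1 : ContinuousAt m₁ t := (hm.hasDerivAt_deriv t ht).continuousAt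
  have hδ0 : ContinuousAt δ t := (hδ.hasDerivAt t ht).continuousAt
  have hδ1 : ContinuousAt δ₁ t := (hδ.hasDerivAt_deriv t ht).continuousAt
  have hw : 1 - weight m δ t u ≠ 0 := (sub_pos.2 (weight_lt_one (hm_lt t ht) u)).ne'
  simp only [Function.uncurry_def, kernelDeriv, weightDeriv, weight, arcAngle] at hw ⊢
  fun_prop (disch := exact Or.inl hw)

theorem continuousOn_kernelDeriv2 (hU : IsOpen U) (hm : HasTwoDerivsOn m m₁ m₂ U)
    (hδ : HasTwoDerivsOn δ δ₁ δ₂ U) (hm_lt : ∀ t ∈ U, |m t| < 1) :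
    ContinuousOn (Function.uncurry (kernelDeriv2 m m₁ m₂ δ δ₁ δ₂)) (U ×ˢ univ) := by
  rintro ⟨t, u⟩ ⟨ht, -⟩
  apply ContinuousAt.continuousWithinAt
  have hm0 : ContinuousAt m t := (hm.hasDerivAt t ht).continuousAt
  have hm1 : ContinuousAt m₁ t := (hm.hasDerivAt_deriv t ht).continuousAt
  have hm2 : ContinuousAt m₂ t := hm.continuousOn_deriv2.continuousAt (hU.mem_nhds ht)
  have hδ0 : ContinuousAt δ t := (hδ.hasDerivAt t ht).continuousAt
  have hδ1 : ContinuousAt δ₁ t := (hδ.hasDerivAt_deriv t ht).continuousAt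
  have hδ2 : ContinuousAt δ₂ t := hδ.continuousOn_deriv2.continuousAt (hU.mem_nhds ht)
  have hw : 1 - weight m δ t u ≠ 0 := (sub_pos.2 (weight_lt_one (hm_lt t ht) u)).ne'
  simp only [Function.uncurry_def, kernelDeriv2, weightDeriv2, weightDeriv, weight,
    arcAngle] at hw ⊢
  fun_prop (disch := exact Or.inl hw)

theorem hasDerivAt_arcAngle {t : ℝ} (hδ : HasDerivAt δ (δ₁ t) t) (u : ℝ) :
    HasDerivAt (arcAngle δ · u) ((1 / 2 - u) * δ₁ t) t := by
  refine (((hδ.const_sub _).mul_const u).add (hδ.div_const 2)).congr_deriv ?_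
  ring

theorem hasDerivAt_kernel {t : ℝ} (hm : HasDerivAt m (m₁ t) t) (hδ : HasDerivAt δ (δ₁ t) t)
    (hm_lt : |m t| < 1) (u : ℝ) :
    HasDerivAt (kernel m δ · u) (kernelDeriv m m₁ δ δ₁ t u) t :=
  hasDerivAt_one_sub_rpow_neg_half (hasDerivAt_mul_sin_sq hm (hasDerivAt_arcAngle hδ u))
    (weight_lt_one hm_lt u)

theorem hasDerivAt_kernelDeriv {t : ℝ} (hm : HasDerivAt m (m₁ t) t)
    (hm₁ : HasDerivAt m₁ (m₂ t) t) (hδ : HasDerivAt δ (δ₁ t) t)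
    (hδ₁ : HasDerivAt δ₁ (δ₂ t) t) (hm_lt : |m t| < 1) (u : ℝ) :
    HasDerivAt (kernelDeriv m m₁ δ δ₁ · u) (kernelDeriv2 m m₁ m₂ δ δ₁ δ₂ t u) t :=
  hasDerivAt_deriv_one_sub_rpow_neg_half (hasDerivAt_mul_sin_sq hm (hasDerivAt_arcAngle hδ u))
    (hasDerivAt_deriv_mul_sin_sq hm hm₁ (hasDerivAt_arcAngle hδ u) (hδ₁.const_mul _))
    (weight_lt_one hm_lt u)

theorem mul_integral_comp_arcAngle (f : ℝ → ℝ) (t : ℝ) :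
    (π / 2 - δ t) * ∫ u in (0 : ℝ)..1, f (arcAngle δ t u) =
      ∫ θ in δ t / 2..π / 2 - δ t / 2, f θ := by
  have h := intervalIntegral.smul_integral_comp_mul_add (a := 0) (b := 1) f (π / 2 - δ t) (δ t / 2)
  rwa [smul_eq_mul, mul_zero, zero_add, mul_one,
    show π / 2 - δ t + δ t / 2 = π / 2 - δ t / 2 by ring] at h

theorem hasDerivAt_integral_kernel (hU : IsOpen U) (hm : HasTwoDerivsOn m m₁ m₂ U)
    (hδ : HasTwoDerivsOn δ δ₁ δ₂ U) (hm_lt : ∀ t ∈ U, |m t| < 1) {t : ℝ} (ht : t ∈ U) :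
    HasDerivAt (fun t => ∫ u in (0 : ℝ)..1, kernel m δ t u)
      (∫ u in (0 : ℝ)..1, kernelDeriv m m₁ δ δ₁ t u) t :=
  hasDerivAt_intervalIntegral_of_continuousOn hU ht
    (fun t ht => (continuous_kernel (hm_lt t ht)).continuousOn)
    ((continuousOn_kernelDeriv hm hδ hm_lt).mono (prod_mono subset_rfl (subset_univ _)))
    (fun t ht u _ => hasDerivAt_kernel (hm.hasDerivAt t ht) (hδ.hasDerivAt t ht) (hm_lt t ht) u)

theorem hasDerivAt_integral_kernelDeriv (hU : IsOpen U) (hm : HasTwoDerivsOn m m₁ m₂ U)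
    (hδ : HasTwoDerivsOn δ δ₁ δ₂ U) (hm_lt : ∀ t ∈ U, |m t| < 1) {t : ℝ} (ht : t ∈ U) :
    HasDerivAt (fun t => ∫ u in (0 : ℝ)..1, kernelDeriv m m₁ δ δ₁ t u)
      (∫ u in (0 : ℝ)..1, kernelDeriv2 m m₁ m₂ δ δ₁ δ₂ t u) t :=
  hasDerivAt_intervalIntegral_of_continuousOn hU ht
    (fun _ ht => (continuousOn_kernelDeriv hm hδ hm_lt).comp
      (continuousOn_const.prodMk continuousOn_id) fun _ _ => ⟨ht, trivial⟩)
    ((continuousOn_kernelDeriv2 hU hm hδ hm_lt).mono (prod_mono subset_rfl (subset_univ _)))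
    (fun t ht u _ => hasDerivAt_kernelDeriv (hm.hasDerivAt t ht) (hm.hasDerivAt_deriv t ht)
      (hδ.hasDerivAt t ht) (hδ.hasDerivAt_deriv t ht) (hm_lt t ht) u)

theorem hasDerivAt_arcIntegral (hU : IsOpen U) (hm : HasTwoDerivsOn m m₁ m₂ U)
    (hδ : HasTwoDerivsOn δ δ₁ δ₂ U) (hm_lt : ∀ t ∈ U, |m t| < 1) {t : ℝ} (ht : t ∈ U) :
    HasDerivAt (arcIntegral m δ) (arcIntegralDeriv m m₁ δ δ₁ t) t :=
  ((hδ.hasDerivAt t ht).const_sub _).mul (hasDerivAt_integral_kernel hU hm hδ hm_lt ht)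

theorem hasDerivAt_arcIntegralDeriv (hU : IsOpen U) (hm : HasTwoDerivsOn m m₁ m₂ U)
    (hδ : HasTwoDerivsOn δ δ₁ δ₂ U) (hm_lt : ∀ t ∈ U, |m t| < 1) {t : ℝ} (ht : t ∈ U) :
    HasDerivAt (arcIntegralDeriv m m₁ δ δ₁)
      (-δ₂ t * (∫ u in (0 : ℝ)..1, kernel m δ t u) -
        2 * δ₁ t * (∫ u in (0 : ℝ)..1, kernelDeriv m m₁ δ δ₁ t u) +
        (π / 2 - δ t) * ∫ u in (0 : ℝ)..1, kernelDeriv2 m m₁ m₂ δ δ₁ δ₂ t u) t := by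
  refine (((hδ.hasDerivAt_deriv t ht).neg.mul (hasDerivAt_integral_kernel hU hm hδ hm_lt ht)).add
    (((hδ.hasDerivAt t ht).const_sub _).mul
      (hasDerivAt_integral_kernelDeriv hU hm hδ hm_lt ht))).congr_deriv ?_
  simp only [Pi.neg_apply]
  ring

theorem kernel_of_eq_zero {t : ℝ} (h : m t = 0) (u : ℝ) : kernel m δ t u = 1 := by
  simp [kernel, weight, h]

theorem kernelDeriv_of_eq_zero {t : ℝ} (h : m t = 0) (u : ℝ) :
    kernelDeriv m m₁ δ δ₁ t u = m₁ t / 2 * sin (arcAngle δ t u) ^ 2 := by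
  simp only [kernelDeriv, weightDeriv, weight, h]
  norm_num
  ring

theorem kernelDeriv2_of_eq_zero {t : ℝ} (h : m t = 0) (h₁ : δ₁ t = 0) (u : ℝ) :
    kernelDeriv2 m m₁ m₂ δ δ₁ δ₂ t u =
      m₂ t / 2 * sin (arcAngle δ t u) ^ 2 + 3 / 4 * m₁ t ^ 2 * sin (arcAngle δ t u) ^ 4 := by
  simp only [kernelDeriv2, weightDeriv2, weightDeriv, weight, h, h₁]
  norm_num
  ring

theorem arcIntegral_of_eq_zero {t : ℝ} (h : m t = 0) : arcIntegral m δ t = π / 2 - δ t := by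
  simp [arcIntegral, kernel_of_eq_zero h]

theorem arcIntegralDeriv_of_eq_zero {t : ℝ} (h : m t = 0) (h₁ : δ₁ t = 0) :
    arcIntegralDeriv m m₁ δ δ₁ t = m₁ t * (π / 2 - δ t) / 4 := by
  have key := mul_integral_comp_arcAngle (δ := δ) (fun θ => sin θ ^ 2) t
  rw [integral_sin_sq_symm] at key
  simp only [arcIntegralDeriv, kernelDeriv_of_eq_zero h, h₁, intervalIntegral.integral_const_mul]
  rw [mul_left_comm, key]
  ring

theorem hasDerivAt_arcIntegralDeriv_of_eq_zero (hU : IsOpen U) (hm : HasTwoDerivsOn m m₁ m₂ U)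
    (hδ : HasTwoDerivsOn δ δ₁ δ₂ U) (hm_lt : ∀ t ∈ U, |m t| < 1) {t : ℝ} (ht : t ∈ U)
    (h : m t = 0) (h₁ : δ₁ t = 0) :
    HasDerivAt (arcIntegralDeriv m m₁ δ δ₁)
      (-δ₂ t + m₂ t * (π / 2 - δ t) / 4 +
        3 / 4 * m₁ t ^ 2 * (3 * (π / 2 - δ t) / 8 - sin (δ t) * cos (δ t) / 8)) t := by
  refine (hasDerivAt_arcIntegralDeriv hU hm hδ hm_lt ht).congr_deriv ?_
  have key := mul_integral_comp_arcAngle (δ := δ)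
    (fun θ => m₂ t / 2 * sin θ ^ 2 + 3 / 4 * m₁ t ^ 2 * sin θ ^ 4) t
  simp only [kernel_of_eq_zero h, kernelDeriv2_of_eq_zero h h₁, h₁, key]
  rw [intervalIntegral.integral_add
    ((Continuous.intervalIntegrable (by fun_prop) _ _))
    ((Continuous.intervalIntegrable (by fun_prop) _ _)),
    intervalIntegral.integral_const_mul, intervalIntegral.integral_const_mul,
    integral_sin_sq_symm, integral_sin_pow_four_symm, intervalIntegral.integral_const]
  norm_num
  ring

theorem iteratedDerivWithin_arcIntegral_div (hU : IsOpen U) (hm : HasTwoDerivsOn m m₁ m₂ U)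
    (hδ : HasTwoDerivsOn δ δ₁ δ₂ U) (hm_lt : ∀ t ∈ U, |m t| < 1) {t₀ : ℝ} (ht₀ : t₀ ∈ U)
    (hm₀ : m t₀ = 0) (hδ₀ : δ₁ t₀ = 0) {s : Set ℝ} (hs : UniqueDiffOn ℝ s) (ht₀s : t₀ ∈ s)
    {f : ℝ → ℝ} (hf : f =ᶠ[𝓝 t₀] fun t => arcIntegral m δ t / arcIntegral m 0 t) :
    iteratedDerivWithin 1 f s t₀ = 0 ∧ iteratedDerivWithin 2 f s t₀ =
      -(2 / π) * (δ₂ t₀ + 3 / 32 * m₁ t₀ ^ 2 * sin (δ t₀) * cos (δ t₀)) := by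
  have h0 : HasTwoDerivsOn 0 0 0 U :=
    ⟨fun t _ => hasDerivAt_const t 0, fun t _ => hasDerivAt_const t 0, continuousOn_const⟩
  have hN := fun t ht => hasDerivAt_arcIntegral hU hm hδ hm_lt (t := t) ht
  have hD := fun t ht => hasDerivAt_arcIntegral hU hm h0 hm_lt (t := t) ht
  have hD₀ : arcIntegral m 0 t₀ = π / 2 := by simp [arcIntegral_of_eq_zero hm₀]
  have hderiv : ∀ᶠ t in 𝓝 t₀, HasDerivAt f ((arcIntegralDeriv m m₁ δ δ₁ t * arcIntegral m 0 t -
      arcIntegral m δ t * arcIntegralDeriv m m₁ 0 0 t) / arcIntegral m 0 t ^ 2) t := by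
    filter_upwards [hf.eventuallyEq_nhds, hU.mem_nhds ht₀,
      (hD t₀ ht₀).continuousAt.eventually_ne (by rw [hD₀]; positivity)] with t hft ht hne
    exact ((hN t ht).div (hD t ht) hne).congr_of_eventuallyEq hft
  obtain ⟨h1, h2⟩ := iteratedDerivWithin_one_two_eq_of_hasDerivAt hs ht₀s hderiv
    (hasDerivAt_deriv_div (hN t₀ ht₀) (hD t₀ ht₀)
      (hasDerivAt_arcIntegralDeriv_of_eq_zero hU hm hδ hm_lt ht₀ hm₀ hδ₀)
      (hasDerivAt_arcIntegralDeriv_of_eq_zero hU hm h0 hm_lt ht₀ hm₀ rfl) (by rw [hD₀]; positivity))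
  have hD₁ : arcIntegralDeriv m m₁ 0 0 t₀ = m₁ t₀ * (π / 2) / 4 := by
    simpa using arcIntegralDeriv_of_eq_zero (m₁ := m₁) (δ := 0) (δ₁ := 0) hm₀ rfl
  rw [h1, h2, hD₀, hD₁, arcIntegralDeriv_of_eq_zero hm₀ hδ₀, arcIntegral_of_eq_zero hm₀]
  have hπ := pi_ne_zero
  simp only [Pi.zero_apply, sin_zero, cos_zero]
  constructor <;> field_simp <;> ring

theorem integral_sub_integral_eq_arcIntegral {t : ℝ} (hm : |m t| < 1) :
    (∫ θ in (0 : ℝ)..π / 2 - δ t / 2, (1 - m t * sin θ ^ 2) ^ (-(1 : ℝ) / 2)) -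
      (∫ θ in (0 : ℝ)..δ t / 2, (1 - m t * sin θ ^ 2) ^ (-(1 : ℝ) / 2)) = arcIntegral m δ t := by
  have hw : ∀ θ, 1 - m t * sin θ ^ 2 ≠ 0 := fun θ => (sub_pos.2 (mul_sin_sq_lt_one hm θ)).ne'
  have hc : Continuous fun θ => (1 - m t * sin θ ^ 2) ^ (-(1 : ℝ) / 2) :=
    Continuous.rpow_const (by fun_prop) fun θ => Or.inl (hw θ)
  rw [intervalIntegral.integral_interval_sub_left (hc.intervalIntegrable _ _)
    (hc.intervalIntegrable _ _), ← mul_integral_comp_arcAngle]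
  rfl

theorem integral_pi_div_two_eq_arcIntegral {t : ℝ} (hm : |m t| < 1) :
    ∫ θ in (0 : ℝ)..π / 2, (1 - m t * sin θ ^ 2) ^ (-(1 : ℝ) / 2) = arcIntegral m 0 t := by
  simpa using integral_sub_integral_eq_arcIntegral (δ := 0) hm

noncomputable def ellipticParam (t : ℝ) : ℝ := 4 * sin t / (1 + sin t) ^ 2

noncomputable def ellipticParamDeriv (t : ℝ) : ℝ := 4 * cos t * (1 - sin t) / (1 + sin t) ^ 3

noncomputable def ellipticParamDeriv2 (t : ℝ) : ℝ :=
  -4 * (4 - sin t) * (1 - sin t) / (1 + sin t) ^ 3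

theorem hasTwoDerivsOn_ellipticParam :
    HasTwoDerivsOn ellipticParam ellipticParamDeriv ellipticParamDeriv2 {t | sin t ≠ -1} := by
  have hne : ∀ t ∈ {t : ℝ | sin t ≠ -1}, 1 + sin t ≠ 0 := fun t ht h => ht (by linarith)
  refine ⟨fun t ht => ?_, fun t ht => ?_, ?_⟩
  · refine (((hasDerivAt_sin t).const_mul 4).div (((hasDerivAt_sin t).const_add 1).pow 2)
      (pow_ne_zero 2 (hne t ht))).congr_deriv ?_
    have := hne t ht
    simp only [ellipticParamDeriv, Pi.pow_apply]
    field_simp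
    ring
  · refine ((((hasDerivAt_cos t).const_mul 4).mul ((hasDerivAt_sin t).const_sub 1)).div
      (((hasDerivAt_sin t).const_add 1).pow 3) (pow_ne_zero 3 (hne t ht))).congr_deriv ?_
    have := hne t ht
    simp only [ellipticParamDeriv2, Pi.pow_apply, Pi.mul_apply]
    field_simp
    linear_combination (-4 - 6 * sin t + 2 * sin t ^ 3) * sin_sq_add_cos_sq t
  · intro t ht
    have := hne t ht
    unfold ellipticParamDeriv2
    fun_prop (disch := exact pow_ne_zero 3 this)

theorem abs_ellipticParam_lt_one {t : ℝ} (h : |sin t| < 1 / 8) : |ellipticParam t| < 1 := by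
  have hs := abs_lt.1 h
  have hpos : 0 < (1 + sin t) ^ 2 := by nlinarith
  rw [ellipticParam, abs_div, abs_of_pos hpos, div_lt_one hpos, abs_mul, abs_of_pos four_pos]
  nlinarith

noncomputable def sinDelta (b t : ℝ) : ℝ :=
  √(1 - b ^ 2) * (1 - sin t ^ 2) / (1 - (1 - b ^ 2) * sin t ^ 2)

noncomputable def sinDeltaDeriv (b t : ℝ) : ℝ :=
  -(√(1 - b ^ 2) * b ^ 2 * sin (2 * t)) / (1 - (1 - b ^ 2) * sin t ^ 2) ^ 2

noncomputable def sinDeltaDeriv2 (b t : ℝ) : ℝ :=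
  -(2 * √(1 - b ^ 2) * b ^ 2 * (cos (2 * t) * (1 - (1 - b ^ 2) * sin t ^ 2) +
    (1 - b ^ 2) * sin (2 * t) ^ 2)) / (1 - (1 - b ^ 2) * sin t ^ 2) ^ 3

theorem one_sub_mul_sin_sq_pos {b : ℝ} (hb : b ≠ 0) (t : ℝ) : 0 < 1 - (1 - b ^ 2) * sin t ^ 2 := by
  rcases eq_or_ne (sin t) 0 with h | h
  · simp [h]
  · have := sin_sq_add_cos_sq t
    have : 0 < b ^ 2 * sin t ^ 2 := by positivity
    nlinarith [sq_nonneg (cos t)]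

theorem hasTwoDerivsOn_sinDelta {b : ℝ} (hb : b ≠ 0) :
    HasTwoDerivsOn (sinDelta b) (sinDeltaDeriv b) (sinDeltaDeriv2 b) univ := by
  have hD := one_sub_mul_sin_sq_pos hb
  have hsq : ∀ t, HasDerivAt (fun t => sin t ^ 2) (sin (2 * t)) t := fun t => by
    refine ((hasDerivAt_sin t).pow 2).congr_deriv ?_
    rw [sin_two_mul]
    ring
  refine ⟨fun t _ => ?_, fun t _ => ?_, ?_⟩
  · refine (((hsq t).const_sub 1).const_mul _ |>.div ((hsq t).const_mul _ |>.const_sub 1)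
      (hD t).ne').congr_deriv ?_
    have := (hD t).ne'
    simp only [sinDeltaDeriv]
    field_simp
    ring
  · have h2 : HasDerivAt (fun t => sin (2 * t)) (2 * cos (2 * t)) t := by
      refine ((hasDerivAt_id t).const_mul 2).sin.congr_deriv ?_
      simp only [id]
      ring
    refine ((h2.const_mul _).neg.div ((((hsq t).const_mul _).const_sub 1).pow 2)
      (pow_ne_zero 2 (hD t).ne')).congr_deriv ?_
    have := (hD t).ne'
    simp only [sinDeltaDeriv2, Pi.pow_apply, Pi.neg_apply]
    field_simp
    ring
  · have := fun t => (hD t).ne'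
    exact (Continuous.div (by fun_prop) (by fun_prop) fun t => pow_ne_zero 3 (this t)).continuousOn

theorem abs_sinDelta_lt_one {b : ℝ} (hb : b ≠ 0) (t : ℝ) : |sinDelta b t| < 1 := by
  have hD := one_sub_mul_sin_sq_pos hb t
  have hK : √(1 - b ^ 2) < 1 := by
    rw [sqrt_lt' one_pos]
    nlinarith [sq_pos_of_ne_zero hb]
  have hc := sin_sq_le_one t
  have hle : 1 - sin t ^ 2 ≤ 1 - (1 - b ^ 2) * sin t ^ 2 := by
    nlinarith [sq_nonneg b, sq_nonneg (sin t)]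
  have hfrac : (1 - sin t ^ 2) / (1 - (1 - b ^ 2) * sin t ^ 2) ≤ 1 := (div_le_one hD).2 hle
  rw [sinDelta, mul_div_assoc, abs_of_nonneg (by positivity)]
  calc √(1 - b ^ 2) * ((1 - sin t ^ 2) / (1 - (1 - b ^ 2) * sin t ^ 2)) ≤ √(1 - b ^ 2) * 1 :=
        mul_le_mul_of_nonneg_left hfrac (sqrt_nonneg _)
    _ < 1 := by linarith

theorem sqrt_one_sub_sq_sqrt_one_sub_sq {b : ℝ} (hb0 : 0 ≤ b) (hb1 : b ≤ 1) :
    √(1 - √(1 - b ^ 2) ^ 2) = b := by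
  rw [sq_sqrt (by nlinarith), sub_sub_cancel, sqrt_sq hb0]

theorem sin_cos_arcsin_sinDelta_zero {b : ℝ} (hb0 : 0 ≤ b) (hb1 : b ≤ 1) :
    sin (arcsin (sinDelta b 0)) = √(1 - b ^ 2) ∧ cos (arcsin (sinDelta b 0)) = b := by
  have hK : √(1 - b ^ 2) ≤ 1 := sqrt_le_one.2 (by nlinarith)
  simp only [sinDelta, sin_zero]
  norm_num
  rw [sin_arcsin (by linarith [sqrt_nonneg (1 - b ^ 2)]) hK, cos_arcsin,
    sqrt_one_sub_sq_sqrt_one_sub_sq hb0 hb1]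
  exact ⟨rfl, rfl⟩

theorem arcsin_sinDelta_deriv2_zero {b : ℝ} (hb0 : 0 < b) (hb1 : b ≤ 1) :
    sinDeltaDeriv2 b 0 / √(1 - sinDelta b 0 ^ 2) +
      sinDelta b 0 * sinDeltaDeriv b 0 ^ 2 / √(1 - sinDelta b 0 ^ 2) ^ 3 =
        -(2 * √(1 - b ^ 2) * b) := by
  simp only [sinDelta, sinDeltaDeriv, sinDeltaDeriv2, sin_zero, cos_zero, mul_zero]
  norm_num
  rw [sqrt_one_sub_sq_sqrt_one_sub_sq hb0.le hb1]
  field_simp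

end KolodziejRotation

open KolodziejRotation

theorem kolodziej_rotation_derivs_one_two (b : ℝ) (hb0 : 0 < b) (hb1 : b < 1 / Real.sqrt 2)
    (F : ℝ → ℝ → ℝ)
    (hF : ∀ α m : ℝ, F α m = ∫ θ in (0:ℝ)..α, (1 - m * Real.sin θ ^ 2) ^ (-(1:ℝ) / 2))
    (m δ ρ : ℝ → ℝ)
    (hm : ∀ t, m t = 4 * Real.sin t / (1 + Real.sin t) ^ 2)
    (hδ : ∀ t, δ t = Real.arcsin (Real.sqrt (1 - b ^ 2) * (1 - Real.sin t ^ 2)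
      / (1 - (1 - b ^ 2) * Real.sin t ^ 2)))
    (hρ : ∀ t, ρ t = (F (Real.pi / 2 - δ t / 2) (m t) - F (δ t / 2) (m t))
      / F (Real.pi / 2) (m t)) :
    iteratedDerivWithin 1 ρ (Set.Ici 0) 0 = 0 ∧
    iteratedDerivWithin 2 ρ (Set.Ici 0) 0 = b * Real.sqrt (1 - b ^ 2) / Real.pi := by
  have hb : b < 1 := hb1.trans (by rw [div_lt_one (by positivity)]; exact one_lt_sqrt_two)
  have hm' : m = ellipticParam := funext hm
  let U := {t : ℝ | |sin t| < 1 / 8}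
  have hU : IsOpen U := isOpen_lt (by fun_prop) continuous_const
  have h0U : (0 : ℝ) ∈ U := by simp [U]
  have hm_lt : ∀ t ∈ U, |m t| < 1 := fun t ht => hm' ▸ abs_ellipticParam_lt_one ht
  have hmU : HasTwoDerivsOn m ellipticParamDeriv ellipticParamDeriv2 U := hm' ▸
    hasTwoDerivsOn_ellipticParam.mono fun t ht h => by norm_num [U, h] at ht
  have hδU := funext hδ ▸ ((hasTwoDerivsOn_sinDelta hb0.ne').arcsin
    fun t _ => abs_sinDelta_lt_one hb0.ne' t).mono (subset_univ U)
  have hρN : ρ =ᶠ[𝓝 0] fun t => arcIntegral m δ t / arcIntegral m 0 t :=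
    eventually_of_mem (hU.mem_nhds h0U) fun t ht => by
      rw [hρ, hF, hF, hF, integral_sub_integral_eq_arcIntegral (hm_lt t ht),
        integral_pi_div_two_eq_arcIntegral (hm_lt t ht)]
  obtain ⟨h1, h2⟩ := iteratedDerivWithin_arcIntegral_div hU hmU hδU hm_lt h0U
    (by simp [hm', ellipticParam]) (by simp [sinDeltaDeriv]) (uniqueDiffOn_Ici 0) self_mem_Ici hρN
  obtain ⟨hsin, hcos⟩ := sin_cos_arcsin_sinDelta_zero hb0.le hb.le
  have hδ0 : δ 0 = arcsin (sinDelta b 0) := hδ 0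
  have hm₁ : ellipticParamDeriv 0 = 4 := by norm_num [ellipticParamDeriv]
  rw [h2, hδ0, hsin, hcos, arcsin_sinDelta_deriv2_zero hb0 hb.le, hm₁]
  refine ⟨h1, ?_⟩
  field_simp
  ring
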